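/- For all nonnegative integers x and y with x < y, one has S_{6,3}([2x, 2y)) = S_{3,0}([2x, 2y)) − S_{3,0}([x, y)), and S_{6,2}([2x, 2y)) = −S_{6,3}([2x, 2y)). -/

import Mathlib

/-- binary digit sum -/
def sigma2 (n : ℕ) : ℕ := (Nat.digits 2 n).sum

/-- `S m l x = Σ_{0 ≤ n < x, n ≡ l (mod m)} (−1)^{σ(n)}` -/
def S (m l x : ℕ) : ℤ :=
  ∑ n ∈ (Finset.range x).filter (fun n => n % m = l), (-1 : ℤ) ^ sigma2 n

/-- `Sint m l x y = S_{m,l}([x,y)) = S_{m,l}(y) − S_{m,l}(x)` -/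
def Sint (m l x y : ℕ) : ℤ := S m l y - S m l x

/-! Split `[0, 2z)` into the pairs `{2k, 2k + 1}` with `k < z`. Since `σ(2k) = σ(k)` and
`σ(2k + 1) = σ(k) + 1`, and the residue of `2k` modulo `2m` is `2 (k mod m)`, one gets
`S_{2m,2l}(2z) = S_{m,l}(z)` and `S_{2m,2l+1}(2z) = -S_{m,l}(z)`. With `m = 3` this gives
`S_{6,2}(2z) = S_{3,1}(z) = -S_{6,3}(2z)`, and splitting the class `0 mod 3` into the classes
`0, 3 mod 6` gives `S_{3,0}(2z) = S_{3,0}(z) - S_{3,1}(z)`; both identities follow by taking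
differences at `z = y` and `z = x`. -/

lemma sigma2_two_mul (k : ℕ) : sigma2 (2 * k) = sigma2 k := by
  rcases Nat.eq_zero_or_pos k with rfl | hk
  · rfl
  · rw [sigma2, Nat.digits_def' one_lt_two (by omega)]
    simp [sigma2]

lemma sigma2_two_mul_add_one (k : ℕ) : sigma2 (2 * k + 1) = sigma2 k + 1 := by
  rw [sigma2, Nat.digits_def' one_lt_two (by omega), show (2 * k + 1) % 2 = 1 by omega,
    show (2 * k + 1) / 2 = k by omega, List.sum_cons, sigma2, add_comm]

lemma two_mul_add_one_mod_two_mul (z m : ℕ) : (2 * z + 1) % (2 * m) = 2 * (z % m) + 1 := by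
  rcases Nat.eq_zero_or_pos m with rfl | hm
  · simp
  · conv_lhs => rw [← Nat.mod_add_div z m, mul_add, add_right_comm, ← mul_assoc,
      Nat.add_mul_mod_self_left]
    exact Nat.mod_eq_of_lt (by have := Nat.mod_lt z hm; omega)

lemma S_succ (m l x : ℕ) :
    S m l (x + 1) = S m l x + if x % m = l then (-1 : ℤ) ^ sigma2 x else 0 := by
  simp only [S, Finset.sum_filter, Finset.sum_range_succ]

lemma S_two_mul_succ (m l z : ℕ) :
    S m l (2 * (z + 1)) = S m l (2 * z) + (if 2 * z % m = l then (-1 : ℤ) ^ sigma2 z else 0)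
      - if (2 * z + 1) % m = l then (-1 : ℤ) ^ sigma2 z else 0 := by
  rw [mul_add_one, S_succ, S_succ, sigma2_two_mul, sigma2_two_mul_add_one, pow_succ]
  split_ifs <;> ring

lemma S_two_mul_two_mul (m l z : ℕ) : S (2 * m) (2 * l) (2 * z) = S m l z := by
  induction z with
  | zero => simp [S]
  | succ z ih =>
    have hodd : (2 * z + 1) % (2 * m) ≠ 2 * l := by
      rw [two_mul_add_one_mod_two_mul]; omega
    rw [S_two_mul_succ, ih, if_neg hodd, sub_zero, Nat.mul_mod_mul_left, S_succ]
    simp only [mul_right_inj' two_ne_zero]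

lemma S_two_mul_two_mul_add_one (m l z : ℕ) : S (2 * m) (2 * l + 1) (2 * z) = -S m l z := by
  induction z with
  | zero => simp [S]
  | succ z ih =>
    have heven : 2 * z % (2 * m) ≠ 2 * l + 1 := by
      rw [Nat.mul_mod_mul_left]; omega
    rw [S_two_mul_succ, ih, if_neg heven, add_zero, two_mul_add_one_mod_two_mul, S_succ]
    split_ifs <;> omega

lemma S_eq_S_two_mul_add_S_two_mul {m l : ℕ} (hl : l < m) (x : ℕ) :
    S m l x = S (2 * m) l x + S (2 * m) (l + m) x := by
  simp only [S, Finset.sum_filter, ← Finset.sum_add_distrib]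
  refine Finset.sum_congr rfl fun n _ => ?_
  have hr := Nat.mod_lt n (by omega : 0 < 2 * m)
  have hfold : n % m = if n % (2 * m) < m then n % (2 * m) else n % (2 * m) - m := by
    rw [← Nat.mod_mul_left_mod n 2 m]
    split_ifs with h
    · exact Nat.mod_eq_of_lt h
    · rw [Nat.mod_eq_sub_mod (by omega), Nat.mod_eq_of_lt (by omega)]
  split_ifs at hfold ⊢ <;> omega

theorem stmt_8_general (x y : ℕ) :
    Sint 6 3 (2 * x) (2 * y) = Sint 3 0 (2 * x) (2 * y) - Sint 3 0 x y ∧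
    Sint 6 2 (2 * x) (2 * y) = -Sint 6 3 (2 * x) (2 * y) := by
  have h60 (z : ℕ) : S 6 0 (2 * z) = S 3 0 z := S_two_mul_two_mul 3 0 z
  have h62 (z : ℕ) : S 6 2 (2 * z) = S 3 1 z := S_two_mul_two_mul 3 1 z
  have h63 (z : ℕ) : S 6 3 (2 * z) = -S 3 1 z := S_two_mul_two_mul_add_one 3 1 z
  have h30 (z : ℕ) : S 3 0 (2 * z) = S 3 0 z - S 3 1 z := by
    rw [S_eq_S_two_mul_add_S_two_mul (by norm_num : 0 < 3), h60, h63, sub_eq_add_neg]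
  simp only [Sint, h62, h63, h30]
  constructor <;> ring

theorem stmt_8 (x y : ℕ) (hxy : x < y) :
    Sint 6 3 (2 * x) (2 * y) = Sint 3 0 (2 * x) (2 * y) - Sint 3 0 x y ∧
    Sint 6 2 (2 * x) (2 * y) = -Sint 6 3 (2 * x) (2 * y) :=
  stmt_8_general x y
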